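/- arXiv:2006.07673 — 3 statements merged into one kernel-verified Lean document; each statement's English description precedes it below -/
import Mathlib

section
/- For every real x in (0, π] and every positive integer m, the partial sum ∑_{j=1}^{m} sin(jx)/j is bounded in absolute value by π + 2. -/
/-!
For `j ≤ π / x` each term satisfies `|sin (j x) / j| ≤ x`, so the first `⌊π / x⌋` terms
contribute at most `π`. The partial sums of `sin (j x)` are bounded by `1 / sin (x / 2)`
(multiply by `2 sin (x / 2)` and telescope), so by Abel summation the remaining terms
contribute at most `2 / ((⌊π / x⌋ + 1) sin (x / 2))`, which is at most `2` by Jordan's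
inequality `sin (x / 2) ≥ x / π`.
-/

open Real Finset

theorem norm_sum_range_smul_le_of_antitone {E : Type*} [SeminormedAddCommGroup E]
    [NormedSpace ℝ E] {a : ℕ → ℝ} {b : ℕ → E} {C : ℝ} (ha : Antitone a) (ha0 : ∀ i, 0 ≤ a i)
    (hb : ∀ k, ‖∑ i ∈ range k, b i‖ ≤ C) (N : ℕ) :
    ‖∑ i ∈ range N, a i • b i‖ ≤ a 0 * C := by
  have hC : 0 ≤ C := by simpa using hb 0
  cases N with
  | zero => simpa using mul_nonneg (ha0 0) hC
  | succ n =>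
    rw [sum_range_by_parts, add_tsub_cancel_right]
    calc ‖a n • ∑ i ∈ range (n + 1), b i
            - ∑ i ∈ range n, (a (i + 1) - a i) • ∑ j ∈ range (i + 1), b j‖
        ≤ a n * C + ∑ i ∈ range n, (a i - a (i + 1)) * C := by
          refine (norm_sub_le _ _).trans (add_le_add ?_ ((norm_sum_le _ _).trans ?_))
          · rw [norm_smul, Real.norm_of_nonneg (ha0 n)]
            exact mul_le_mul_of_nonneg_left (hb _) (ha0 n)
          · refine sum_le_sum fun i _ => ?_
            rw [norm_smul, Real.norm_of_nonpos (sub_nonpos.2 (ha i.le_succ)), neg_sub]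
            exact mul_le_mul_of_nonneg_left (hb _) (sub_nonneg.2 (ha i.le_succ))
      _ = a 0 * C := by rw [← sum_mul, sum_range_sub']; ring

theorem two_mul_sin_half_mul_sum_range_sin (x : ℝ) (k : ℕ) :
    2 * sin (x / 2) * ∑ i ∈ range k, sin (i * x) = cos (x / 2) - cos ((k - 1 / 2) * x) := by
  induction k with
  | zero => simp [div_eq_inv_mul]
  | succ k ih =>
    have h : 2 * sin (k * x) * sin (x / 2)
        = cos ((k - 1 / 2) * x) - cos ((k + 1 - 1 / 2) * x) := by
      rw [two_mul_sin_mul_sin]; ring_nf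
    rw [sum_range_succ, mul_add, ih, mul_right_comm, h]
    push_cast
    ring

theorem abs_sum_range_sin_mul_le {x : ℝ} (hx : 0 < sin (x / 2)) (k : ℕ) :
    |∑ i ∈ range k, sin (i * x)| ≤ 1 / sin (x / 2) := by
  rw [le_div_iff₀ hx]
  have h : |2 * sin (x / 2) * ∑ i ∈ range k, sin (i * x)| ≤ 2 := by
    rw [two_mul_sin_half_mul_sum_range_sin]
    exact (abs_sub _ _).trans
      (by linarith [abs_cos_le_one (x / 2), abs_cos_le_one ((k - 1 / 2) * x)])
  rw [abs_mul, abs_mul, abs_two, abs_of_pos hx] at h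
  linarith

theorem abs_sum_Ioc_sin_mul_div_le {x : ℝ} (hx : 0 < sin (x / 2)) (n m : ℕ) :
    |∑ j ∈ Ioc n m, sin (j * x) / j| ≤ 2 / ((n + 1) * sin (x / 2)) := by
  have ha : Antitone fun i : ℕ => ((n + 1 + i : ℕ) : ℝ)⁻¹ := fun i j hij => by
    dsimp only
    gcongr
  have hb : ∀ k, ‖∑ i ∈ range k, sin (((n + 1 + i : ℕ) : ℝ) * x)‖ ≤ 2 / sin (x / 2) := by
    intro k
    rw [Real.norm_eq_abs,
      eq_sub_of_add_eq' (sum_range_add (fun i : ℕ => sin (i * x)) (n + 1) k).symm]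
    calc _ ≤ 1 / sin (x / 2) + 1 / sin (x / 2) := (abs_sub _ _).trans
          (add_le_add (abs_sum_range_sin_mul_le hx _) (abs_sum_range_sin_mul_le hx _))
      _ = 2 / sin (x / 2) := by ring
  have := norm_sum_range_smul_le_of_antitone ha (fun i => by positivity) hb (m + 1 - (n + 1))
  rw [← Ico_add_one_add_one_eq_Ioc, sum_Ico_eq_sum_range]
  simpa [div_eq_inv_mul, mul_comm, mul_left_comm] using this

theorem abs_sum_Icc_sin_mul_div_le (x : ℝ) (k : ℕ) :
    |∑ j ∈ Icc 1 k, sin (j * x) / j| ≤ k * |x| := by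
  calc |∑ j ∈ Icc 1 k, sin (j * x) / j|
      ≤ ∑ j ∈ Icc 1 k, |x| := (abs_sum_le_sum_abs _ _).trans <| sum_le_sum fun j hj => by
        have hj : (0 : ℝ) < j := by exact_mod_cast (mem_Icc.1 hj).1
        rw [abs_div, abs_of_pos hj, div_le_iff₀ hj]
        calc |sin (j * x)| ≤ |j * x| := abs_sin_le_abs
          _ = |x| * j := by rw [abs_mul, abs_of_pos hj, mul_comm]
    _ = k * |x| := by simp

theorem one_le_floor_pi_div_add_one_mul_sin_half {x : ℝ} (hx0 : 0 < x) (hxpi : x ≤ π) :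
    1 ≤ (⌊π / x⌋₊ + 1) * sin (x / 2) := by
  have hfloor : π / x ≤ ⌊π / x⌋₊ + 1 := (Nat.lt_floor_add_one _).le
  have hjordan : x / π ≤ sin (x / 2) := by
    convert mul_le_sin (x := x / 2) (by positivity) (by linarith) using 1
    ring
  calc (1 : ℝ) = π / x * (x / π) := by field_simp
    _ ≤ (⌊π / x⌋₊ + 1) * sin (x / 2) := by gcongr

theorem sin_sum_div_bound_general (x : ℝ) (hx0 : 0 < x) (hxpi : x ≤ Real.pi)
    (m : ℕ) :
    |∑ j ∈ Finset.Icc 1 m, Real.sin (j * x) / j| ≤ Real.pi + 2 := by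
  have hs : 0 < sin (x / 2) := sin_pos_of_pos_of_lt_pi (by linarith) (by linarith [pi_pos])
  set n := ⌊π / x⌋₊
  have hhead : n * |x| ≤ π := by
    rw [abs_of_pos hx0, ← le_div_iff₀ hx0]
    exact Nat.floor_le (by positivity)
  rcases le_total m n with hmn | hnm
  · calc _ ≤ m * |x| := abs_sum_Icc_sin_mul_div_le x m
      _ ≤ n * |x| := by gcongr
      _ ≤ π + 2 := by linarith
  · rw [show Icc 1 m = Ioc 0 m from rfl, ← sum_Ioc_consecutive _ (Nat.zero_le n) hnm]
    calc _ ≤ n * |x| + 2 / ((n + 1) * sin (x / 2)) :=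
          (abs_add_le _ _).trans (add_le_add (abs_sum_Icc_sin_mul_div_le x n)
            (abs_sum_Ioc_sin_mul_div_le hs n m))
      _ ≤ π + 2 := add_le_add hhead
          (div_le_self zero_le_two (one_le_floor_pi_div_add_one_mul_sin_half hx0 hxpi))

theorem sin_sum_div_bound (x : ℝ) (hx0 : 0 < x) (hxpi : x ≤ Real.pi)
    (m : ℕ) (hm : 0 < m) :
    |∑ j ∈ Finset.Icc 1 m, Real.sin (j * x) / j| ≤ Real.pi + 2 :=
  sin_sum_div_bound_general x hx0 hxpi m
end

section
/- Let Q_j be the j-th Legendre polynomial and f a C² function on [−1,1]. Then for every j ≥ 1, |∫_{−1}^{1} Q_j(x) f(x) dx| ≤ (2√2 · c)/(j(j+1)(2j+1)^{1/2}), where c = max(2‖f′‖_∞, ‖f″‖_∞). -/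
open Real intervalIntegral

/-- The `j`-th Legendre polynomial via Rodrigues' formula. -/
noncomputable def legendreQ (j : ℕ) (x : ℝ) : ℝ :=
  (1 / (2 ^ j * (Nat.factorial j))) *
    iteratedDeriv j (fun y : ℝ => (y ^ 2 - 1) ^ j) x

/-!
By Rodrigues' formula `Q_j` is a multiple of the `j`-th derivative of `u = (x² - 1)ʲ`, and
differentiating `(x² - 1) u' = 2 j x u` repeatedly gives Legendre's equation
`((x² - 1) Q_j')' = j (j + 1) Q_j`. Two integrations by parts, whose boundary terms vanish
because `x² - 1` does at `±1`, turn `j (j + 1) ∫ Q_j f` into `∫ Q_j ((x² - 1) f')'`, and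
`|((x² - 1) f')'| ≤ |x| · 2|f'| + (1 - x²)|f''| ≤ (5/4) c` on `[-1, 1]`.
Finally `∫ |Q_j| ≤ √2 ‖Q_j‖₂ = 2 / √(2j + 1)` by Cauchy–Schwarz, and `5/2 ≤ 2√2`.
-/

open Polynomial Nat Set

namespace Polynomial

variable {R : Type*} [CommRing R]

theorem Monic.iterate_derivative_natDegree [Nontrivial R] {p : R[X]} (hp : p.Monic) :
    derivative^[p.natDegree] p = (p.natDegree ! : R[X]) := by
  set n := p.natDegree
  rw [← eraseLead_add_C_mul_X_pow p, iterate_map_add,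
    iterate_derivative_eq_zero_of_degree_lt, hp.leadingCoeff, C_1, one_mul,
    iterate_derivative_X_pow_eq_C_mul, descFactorial_self, Nat.sub_self, pow_zero, mul_one,
    C_eq_natCast, zero_add]
  exact (degree_eraseLead_lt hp.ne_zero).trans_le degree_le_natDegree

theorem iteratedDeriv_eval {𝕜 : Type*} [NontriviallyNormedField 𝕜] (p : 𝕜[X]) (n : ℕ) :
    iteratedDeriv n (fun x => p.eval x) = fun x => (derivative^[n] p).eval x := by
  induction n with
  | zero => rfl
  | succ n ih =>
    ext x
    rw [iteratedDeriv_succ, ih, Function.iterate_succ_apply', Polynomial.deriv]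

variable (R) in
noncomputable def rodriguesDeriv (j n : ℕ) : R[X] := derivative^[n] ((X ^ 2 - 1) ^ j)

@[simp] theorem rodriguesDeriv_zero (j : ℕ) : rodriguesDeriv R j 0 = (X ^ 2 - 1) ^ j := rfl

theorem rodriguesDeriv_succ (j n : ℕ) :
    rodriguesDeriv R j (n + 1) = derivative (rodriguesDeriv R j n) :=
  Function.iterate_succ_apply' _ _ _

theorem iterate_derivative_rodriguesDeriv (j k n : ℕ) :
    derivative^[k] (rodriguesDeriv R j n) = rodriguesDeriv R j (k + n) :=
  (Function.iterate_add_apply _ _ _ _).symm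

theorem X_sq_sub_one_mul_rodriguesDeriv_one (j : ℕ) :
    (X ^ 2 - 1) * rodriguesDeriv R j 1 = 2 * (j : R[X]) * X * rodriguesDeriv R j 0 := by
  cases j with
  | zero => simp [rodriguesDeriv_succ]
  | succ m =>
    rw [rodriguesDeriv_succ, rodriguesDeriv_zero, derivative_pow, derivative_sub,
      derivative_X_sq, derivative_one, Nat.add_sub_cancel, C_eq_natCast, map_ofNat]
    push_cast
    ring

/-- Leibniz' rule for the `(n + 1)`-st derivative of `(X² - 1) u' = 2 j X u`. -/
theorem X_sq_sub_one_mul_rodriguesDeriv_add_two (j n : ℕ) :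
    (X ^ 2 - 1) * rodriguesDeriv R j (n + 2) =
      2 * ((j : R[X]) - (n : R[X]) - 1) * X * rodriguesDeriv R j (n + 1) +
        ((n : R[X]) + 1) * (2 * (j : R[X]) - (n : R[X])) * rodriguesDeriv R j n := by
  induction n with
  | zero =>
    have h := congrArg derivative (X_sq_sub_one_mul_rodriguesDeriv_one (R := R) j)
    simp only [derivative_mul, ← rodriguesDeriv_succ, derivative_sub, derivative_X_sq, map_ofNat,
      derivative_one, derivative_ofNat, derivative_natCast, derivative_X] at h
    linear_combination h
  | succ n ih =>
    have h := congrArg derivative ih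
    simp only [derivative_mul, ← rodriguesDeriv_succ, derivative_sub, derivative_X_sq, map_ofNat,
      derivative_one, derivative_ofNat, derivative_natCast, derivative_X, derivative_add] at h
    push_cast
    linear_combination h

theorem derivative_X_sq_sub_one_mul_derivative_rodriguesDeriv (j : ℕ) :
    derivative ((X ^ 2 - 1) * derivative (rodriguesDeriv R j j)) =
      (j : R[X]) * ((j : R[X]) + 1) * rodriguesDeriv R j j := by
  cases j with
  | zero => simp [rodriguesDeriv]
  | succ m =>
    rw [← rodriguesDeriv_succ, X_sq_sub_one_mul_rodriguesDeriv_add_two]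
    simp only [derivative_mul, derivative_add, ← rodriguesDeriv_succ, derivative_sub,
      derivative_ofNat, derivative_natCast, derivative_X, derivative_one]
    push_cast
    ring

theorem rodriguesDeriv_eval_eq_zero {j k : ℕ} (hk : k < j) {x : R} (hx : x ^ 2 = 1) :
    (rodriguesDeriv R j k).eval x = 0 := by
  obtain ⟨r, hr⟩ := (dvd_pow_self (X ^ 2 - 1 : R[X]) (Nat.sub_ne_zero_of_lt hk)).trans
    (pow_sub_dvd_iterate_derivative_pow _ j k)
  simp [rodriguesDeriv, hr, hx]

theorem rodriguesDeriv_two_mul_self [Nontrivial R] (j : ℕ) :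
    rodriguesDeriv R j (2 * j) = ((2 * j) ! : R[X]) := by
  have hmonic : (X ^ 2 - 1 : R[X]).Monic := by simpa using monic_X_pow_sub_C (1 : R) two_ne_zero
  have hdeg : ((X ^ 2 - 1 : R[X]) ^ j).natDegree = 2 * j := by
    rw [hmonic.natDegree_pow, show (X ^ 2 - 1 : R[X]) = X ^ 2 - C 1 by simp,
      natDegree_X_pow_sub_C, mul_comm]
  rw [rodriguesDeriv, ← hdeg, (hmonic.pow j).iterate_derivative_natDegree]

end Polynomial

theorem sq_integral_abs_le_mul_integral_sq {g : ℝ → ℝ} (hg : Continuous g) {a b : ℝ}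
    (hab : a ≤ b) : (∫ x in a..b, |g x|) ^ 2 ≤ (b - a) * ∫ x in a..b, g x ^ 2 := by
  set A := ∫ x in a..b, |g x|
  rcases hab.eq_or_lt with rfl | hlt
  · simp [A]
  set t := A / (b - a)
  have hamgm : 2 * t * A ≤ (∫ x in a..b, g x ^ 2) + t ^ 2 * (b - a) := by
    have hmono : ∫ x in a..b, 2 * t * |g x| ≤ ∫ x in a..b, (g x ^ 2 + t ^ 2) :=
      integral_mono_on hab (Continuous.intervalIntegrable (by fun_prop) _ _)
        (Continuous.intervalIntegrable (by fun_prop) _ _)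
        fun x _ => by nlinarith [sq_nonneg (|g x| - t), sq_abs (g x)]
    rwa [integral_const_mul, integral_add (f := fun x => g x ^ 2)
      ((hg.pow 2).intervalIntegrable _ _) intervalIntegrable_const, integral_const, smul_eq_mul,
      mul_comm (b - a)] at hmono
  have ht : t * (b - a) = A := div_mul_cancel₀ A (sub_pos.mpr hlt).ne'
  nlinarith

theorem abs_integral_mul_le_of_abs_le {g h : ℝ → ℝ} (hg : Continuous g) (hh : Continuous h)
    {a b M : ℝ} (hab : a ≤ b) (hbound : ∀ x ∈ Icc a b, |h x| ≤ M) :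
    |∫ x in a..b, g x * h x| ≤ M * ∫ x in a..b, |g x| := by
  rw [← integral_const_mul]
  refine (abs_integral_le_integral_abs hab).trans
    (integral_mono_on hab (Continuous.intervalIntegrable (by fun_prop) _ _)
      (Continuous.intervalIntegrable (by fun_prop) _ _) fun x hx => ?_)
  rw [abs_mul, mul_comm M]
  exact mul_le_mul_of_nonneg_left (hbound x hx) (abs_nonneg _)

theorem le_iSup_Icc {g : ℝ → ℝ} {a b x : ℝ} (hg : ContinuousOn g (Icc a b))
    (hx : x ∈ Icc a b) : g x ≤ ⨆ y : Icc a b, g y :=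
  le_ciSup (f := fun y : Icc a b => g y)
    (by rw [← image_eq_range]; exact isCompact_Icc.bddAbove_image hg) ⟨x, hx⟩

theorem abs_two_mul_mul_add_sq_sub_one_mul_le {x u v c : ℝ} (hx : x ∈ Icc (-1 : ℝ) 1)
    (hu : 2 * |u| ≤ c) (hv : |v| ≤ c) : |2 * x * u + (x ^ 2 - 1) * v| ≤ 5 / 4 * c := by
  have hx1 : |x| ≤ 1 := abs_le.mpr hx
  have hx2 : 0 ≤ 1 - x ^ 2 := by nlinarith [sq_abs x, abs_nonneg x]
  calc |2 * x * u + (x ^ 2 - 1) * v|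
      ≤ |x| * (2 * |u|) + (1 - x ^ 2) * |v| := by
        refine (abs_add_le _ _).trans_eq ?_
        rw [abs_mul, abs_mul, abs_mul, abs_two, abs_of_nonpos (by linarith : x ^ 2 - 1 ≤ 0)]
        ring
    _ ≤ |x| * c + (1 - x ^ 2) * c := by gcongr
    _ ≤ 5 / 4 * c := by nlinarith [sq_abs x, sq_nonneg (|x| - 1 / 2), abs_nonneg v]

theorem integral_mul_eq_of_legendre_ode {P : ℝ[X]} {l : ℝ}
    (hP : derivative ((X ^ 2 - 1) * derivative P) = C l * P)
    {f f' f'' : ℝ → ℝ} (hf : ∀ x, HasDerivAt f (f' x) x)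
    (hf' : ∀ x, HasDerivAt f' (f'' x) x) (hf'' : Continuous f'') :
    l * ∫ x in (-1 : ℝ)..1, P.eval x * f x =
      ∫ x in (-1 : ℝ)..1, P.eval x * (2 * x * f' x + (x ^ 2 - 1) * f'' x) := by
  have hcf' : Continuous f' := continuous_iff_continuousAt.mpr fun x => (hf' x).continuousAt
  set W : ℝ[X] := (X ^ 2 - 1) * derivative P
  have hfW := integral_mul_deriv_eq_deriv_mul (a := -1) (b := 1) (fun x _ => hf x)
    (fun x _ => W.hasDerivAt x) (hcf'.intervalIntegrable _ _)
    (W.derivative.continuous.intervalIntegrable _ _)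
  have hg (x : ℝ) : HasDerivAt (fun x => (x ^ 2 - 1) * f' x)
      (2 * x * f' x + (x ^ 2 - 1) * f'' x) x := by
    refine (((hasDerivAt_pow 2 x).sub_const 1).mul (hf' x)).congr_deriv ?_
    ring
  have hgP := integral_mul_deriv_eq_deriv_mul (a := -1) (b := 1) (fun x _ => hg x)
    (fun x _ => P.hasDerivAt x) (Continuous.intervalIntegrable (by fun_prop) _ _)
    (P.derivative.continuous.intervalIntegrable _ _)
  simp only [hP, W, eval_mul, eval_C, eval_sub, eval_pow, eval_X, eval_one] at hfW hgP
  norm_num at hfW hgP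
  calc l * ∫ x in (-1 : ℝ)..1, P.eval x * f x
      = ∫ x in (-1 : ℝ)..1, f x * (l * P.eval x) := by
        rw [← integral_const_mul]; exact integral_congr fun x _ => by ring
    _ = -∫ x in (-1 : ℝ)..1, (x ^ 2 - 1) * f' x * P.derivative.eval x := by
        rw [hfW]; congr 1; exact integral_congr fun x _ => by ring
    _ = _ := by rw [hgP, neg_neg]; exact integral_congr fun x _ => by ring

theorem integral_rodriguesDeriv_mul {j k : ℕ} (hk : k ≤ j) (q : ℝ[X]) :
    ∫ x in (-1 : ℝ)..1, q.eval x * (rodriguesDeriv ℝ j k).eval x =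
      (-1) ^ k * ∫ x in (-1 : ℝ)..1, (derivative^[k] q).eval x * (x ^ 2 - 1) ^ j := by
  induction k generalizing q with
  | zero => simp
  | succ k ih =>
    have hparts := integral_mul_deriv_eq_deriv_mul (a := -1) (b := 1)
      (fun x _ => q.hasDerivAt x) (fun x _ => (rodriguesDeriv ℝ j k).hasDerivAt x)
      (q.derivative.continuous.intervalIntegrable _ _)
      ((rodriguesDeriv ℝ j k).derivative.continuous.intervalIntegrable _ _)
    rw [rodriguesDeriv_eval_eq_zero (by omega) (by norm_num : (1 : ℝ) ^ 2 = 1),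
      rodriguesDeriv_eval_eq_zero (by omega) (by norm_num : (-1 : ℝ) ^ 2 = 1)] at hparts
    rw [rodriguesDeriv_succ, hparts, ih (by omega), Function.iterate_succ_apply]
    ring

theorem integral_one_sub_sq_pow_succ (j : ℕ) :
    (2 * (j : ℝ) + 3) * ∫ x in (-1 : ℝ)..1, (1 - x ^ 2) ^ (j + 1) =
      (2 * (j : ℝ) + 2) * ∫ x in (-1 : ℝ)..1, (1 - x ^ 2) ^ j := by
  have hderiv (x : ℝ) : HasDerivAt (fun x => x * (1 - x ^ 2) ^ (j + 1))
      ((2 * j + 3) * (1 - x ^ 2) ^ (j + 1) - (2 * j + 2) * (1 - x ^ 2) ^ j) x := by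
    refine ((hasDerivAt_id' x).fun_mul
      (((hasDerivAt_pow 2 x).const_sub 1).fun_pow (j + 1))).congr_deriv ?_
    push_cast
    ring
  have hint (n : ℕ) (a : ℝ) :
      IntervalIntegrable (fun x : ℝ => a * (1 - x ^ 2) ^ n) MeasureTheory.volume (-1) 1 :=
    Continuous.intervalIntegrable (by fun_prop) _ _
  have hFTC := integral_eq_sub_of_hasDerivAt (fun x _ => hderiv x)
    ((hint (j + 1) _).sub (hint j _))
  rw [integral_sub (hint (j + 1) _) (hint j _), integral_const_mul, integral_const_mul] at hFTC
  norm_num at hFTC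
  linarith

theorem integral_one_sub_sq_pow (j : ℕ) :
    ∫ x in (-1 : ℝ)..1, (1 - x ^ 2) ^ j = 2 ^ (2 * j + 1) * (j ! : ℝ) ^ 2 / (2 * j + 1)! := by
  induction j with
  | zero => norm_num
  | succ j ih =>
    have h := integral_one_sub_sq_pow_succ j
    rw [ih] at h
    rw [eq_div_iff (by positivity), show 2 * (j + 1) + 1 = 2 * j + 1 + 1 + 1 by ring,
      factorial_succ, factorial_succ, factorial_succ j]
    push_cast
    field_simp at h
    linear_combination (2 * (j : ℝ) + 2) * h

noncomputable def legendrePoly (j : ℕ) : ℝ[X] :=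
  C (2 ^ j * j ! : ℝ)⁻¹ * rodriguesDeriv ℝ j j

theorem legendreQ_eq_eval (j : ℕ) (x : ℝ) : legendreQ j x = (legendrePoly j).eval x := by
  have hu : (fun y : ℝ => (y ^ 2 - 1) ^ j) = fun y => ((X ^ 2 - 1) ^ j : ℝ[X]).eval y := by
    simp
  rw [legendreQ, hu, iteratedDeriv_eval, legendrePoly, eval_mul, eval_C, one_div]
  rfl

theorem derivative_X_sq_sub_one_mul_derivative_legendrePoly (j : ℕ) :
    derivative ((X ^ 2 - 1) * derivative (legendrePoly j)) =
      C ((j : ℝ) * (j + 1)) * legendrePoly j := by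
  rw [legendrePoly, derivative_C_mul, mul_left_comm, derivative_C_mul,
    derivative_X_sq_sub_one_mul_derivative_rodriguesDeriv, map_mul, map_add, map_one,
    C_eq_natCast]
  ring

/-- `j` integrations by parts give `∫ (u⁽ʲ⁾)² = (-1)ʲ ∫ u u⁽²ʲ⁾ = (2j)! ∫ (1 - x²)ʲ`. -/
theorem integral_legendrePoly_sq (j : ℕ) :
    ∫ x in (-1 : ℝ)..1, (legendrePoly j).eval x ^ 2 = 2 / (2 * j + 1) := by
  have hsq (x : ℝ) : (legendrePoly j).eval x ^ 2 = (2 ^ j * j ! : ℝ)⁻¹ ^ 2 *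
      ((rodriguesDeriv ℝ j j).eval x * (rodriguesDeriv ℝ j j).eval x) := by
    rw [legendrePoly, eval_mul, eval_C]; ring
  have hsign : (-1 : ℝ) ^ j * ∫ x in (-1 : ℝ)..1, (x ^ 2 - 1) ^ j =
      ∫ x in (-1 : ℝ)..1, (1 - x ^ 2) ^ j := by
    rw [← integral_const_mul]
    congr 1 with x
    rw [← mul_pow]
    ring
  simp_rw [hsq, integral_const_mul]
  rw [integral_rodriguesDeriv_mul le_rfl, iterate_derivative_rodriguesDeriv, ← two_mul,
    rodriguesDeriv_two_mul_self]
  simp only [eval_natCast, integral_const_mul]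
  rw [mul_left_comm ((-1 : ℝ) ^ j), hsign, integral_one_sub_sq_pow, Nat.factorial_succ]
  push_cast
  field_simp
  ring

theorem integral_abs_legendrePoly_le (j : ℕ) :
    ∫ x in (-1 : ℝ)..1, |(legendrePoly j).eval x| ≤ 2 / √(2 * j + 1) := by
  have hCS := sq_integral_abs_le_mul_integral_sq (legendrePoly j).continuous
    (by norm_num : (-1 : ℝ) ≤ 1)
  rw [integral_legendrePoly_sq] at hCS
  rw [← pow_le_pow_iff_left₀ (integral_nonneg (by norm_num) fun x _ => abs_nonneg _)
    (by positivity) two_ne_zero, div_pow, sq_sqrt (by positivity)]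
  exact hCS.trans_eq (by ring)

theorem mul_integral_legendrePoly_mul_eq {f : ℝ → ℝ} (hf : ContDiff ℝ 2 f) (j : ℕ) :
    (j * (j + 1)) * ∫ x in (-1 : ℝ)..1, (legendrePoly j).eval x * f x =
      ∫ x in (-1 : ℝ)..1, (legendrePoly j).eval x *
        (2 * x * deriv f x + (x ^ 2 - 1) * deriv (deriv f) x) := by
  have hf' : ContDiff ℝ 1 (deriv f) := hf.deriv' (n := 1)
  exact integral_mul_eq_of_legendre_ode (derivative_X_sq_sub_one_mul_derivative_legendrePoly j)
    (fun x => (hf.differentiable two_ne_zero x).hasDerivAt)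
    (fun x => (hf'.differentiable one_ne_zero x).hasDerivAt) (hf'.continuous_deriv le_rfl)

theorem abs_two_mul_deriv_add_sq_sub_one_mul_deriv_deriv_le {f : ℝ → ℝ}
    (hf : ContDiff ℝ 2 f) {x : ℝ} (hx : x ∈ Icc (-1 : ℝ) 1) :
    |2 * x * deriv f x + (x ^ 2 - 1) * deriv (deriv f) x| ≤
      5 / 4 * max (2 * ⨆ y : Icc (-1 : ℝ) 1, |deriv f y|)
        (⨆ y : Icc (-1 : ℝ) 1, |deriv (deriv f) y|) := by
  have hf' : ContDiff ℝ 1 (deriv f) := hf.deriv' (n := 1)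
  refine abs_two_mul_mul_add_sq_sub_one_mul_le hx ?_ ?_
  · exact (mul_le_mul_of_nonneg_left (le_iSup_Icc hf'.continuous.abs.continuousOn hx)
      zero_le_two).trans (le_max_left _ _)
  · exact (le_iSup_Icc (hf'.continuous_deriv le_rfl).abs.continuousOn hx).trans
      (le_max_right _ _)

theorem legendre_integral_bound (f : ℝ → ℝ) (hf : ContDiff ℝ 2 f)
    (j : ℕ) (hj : 1 ≤ j) :
    |∫ x in (-1 : ℝ)..1, legendreQ j x * f x| ≤
      (2 * Real.sqrt 2 *
          max (2 * ⨆ x : Set.Icc (-1 : ℝ) 1, |deriv f x|)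
            (⨆ x : Set.Icc (-1 : ℝ) 1, |deriv (deriv f) x|)) /
        (j * (j + 1) * Real.sqrt (2 * j + 1)) := by
  set c := max (2 * ⨆ x : Icc (-1 : ℝ) 1, |deriv f x|)
    (⨆ x : Icc (-1 : ℝ) 1, |deriv (deriv f) x|)
  have hbound := fun x (hx : x ∈ Icc (-1 : ℝ) 1) =>
    abs_two_mul_deriv_add_sq_sub_one_mul_deriv_deriv_le hf hx
  have hc : 0 ≤ c := by linarith [(abs_nonneg _).trans (hbound 0 (by norm_num))]
  have hf' : ContDiff ℝ 1 (deriv f) := hf.deriv' (n := 1)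
  have hj' : (0 : ℝ) < j := by exact_mod_cast hj
  simp_rw [legendreQ_eq_eval]
  rw [le_div_iff₀ (by positivity)]
  calc |∫ x in (-1 : ℝ)..1, (legendrePoly j).eval x * f x| * (j * (j + 1) * √(2 * j + 1))
      = |∫ x in (-1 : ℝ)..1, (legendrePoly j).eval x *
          (2 * x * deriv f x + (x ^ 2 - 1) * deriv (deriv f) x)| * √(2 * j + 1) := by
        rw [← mul_integral_legendrePoly_mul_eq hf, abs_mul,
          abs_of_pos (by positivity : (0 : ℝ) < j * (j + 1))]
        ring
    _ ≤ 5 / 4 * c * (2 / √(2 * j + 1)) * √(2 * j + 1) := by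
        grw [abs_integral_mul_le_of_abs_le (legendrePoly j).continuous (by fun_prop)
          (by norm_num) hbound, integral_abs_legendrePoly_le j]
    _ = 5 / 2 * c := by field_simp; ring
    _ ≤ 2 * √2 * c := by
        gcongr
        nlinarith [sq_sqrt (zero_le_two : (0 : ℝ) ≤ 2), sqrt_nonneg 2]
end

section
/- Let X be an ℝ^d-valued random variable with bounded density f, k ∈ L¹(ℝ) a symmetric kernel, h ∈ (0,∞)^d, and ψ ∈ L²(ℝ^d). Then E[(k_h ∗ ψ)(X)²] ≤ ‖f‖_∞ ‖k‖_{L¹(ℝ)}^{2d} ‖ψ‖_{L²(ℝ^d)}². -/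
/-!
Bounding the density by `M` reduces the claim to Young's inequality
`‖k_h ∗ ψ‖₂ ≤ ‖k_h‖₁ ‖ψ‖₂`, and `‖k_h‖₁ = ‖k‖₁ ^ d` because `k_h` is a tensor product of the
`L¹`-isometric rescalings `t ↦ h⁻¹ k (t / h)` of `k`. Young's inequality follows from the weighted
Cauchy–Schwarz inequality `(∫ |K| |ψ (x - ·)|)² ≤ ‖K‖₁ ∫ |K| |ψ (x - ·)|²`, integrated in `x`
with Tonelli and translation invariance.
-/

open MeasureTheory
open scoped ENNReal

theorem ENNReal.sq_lintegral_mul_le {α : Type*} [MeasurableSpace α] {μ : Measure α}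
    {a b : α → ℝ≥0∞} (ha : AEMeasurable a μ) (hb : AEMeasurable b μ) :
    (∫⁻ x, a x * b x ∂μ) ^ 2 ≤ (∫⁻ x, a x ∂μ) * ∫⁻ x, a x * b x ^ 2 ∂μ := by
  have hsplit : ∀ x, a x * b x = a x ^ (1 / 2 : ℝ) * (a x * b x ^ 2) ^ (1 / 2 : ℝ) := by
    intro x
    rw [ENNReal.mul_rpow_of_nonneg _ _ (by norm_num), ← ENNReal.rpow_natCast (b x) 2,
      ← ENNReal.rpow_mul, ← mul_assoc, ← ENNReal.rpow_add_of_nonneg _ _ (by norm_num) (by norm_num)]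
    norm_num
  have holder := ENNReal.lintegral_mul_norm_pow_le ha (ha.mul (hb.pow_const 2))
    (by norm_num : (0 : ℝ) ≤ 1 / 2) (by norm_num : (0 : ℝ) ≤ 1 / 2) (by norm_num)
  calc (∫⁻ x, a x * b x ∂μ) ^ 2
      = (∫⁻ x, a x ^ (1 / 2 : ℝ) * (a x * b x ^ 2) ^ (1 / 2 : ℝ) ∂μ) ^ 2 := by
        rw [lintegral_congr hsplit]
    _ ≤ ((∫⁻ x, a x ∂μ) ^ (1 / 2 : ℝ) * (∫⁻ x, a x * b x ^ 2 ∂μ) ^ (1 / 2 : ℝ)) ^ 2 := by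
        gcongr; exact holder
    _ = (∫⁻ x, a x ∂μ) * ∫⁻ x, a x * b x ^ 2 ∂μ := by
        rw [mul_pow, ← ENNReal.rpow_natCast _ 2, ← ENNReal.rpow_natCast _ 2,
          ← ENNReal.rpow_mul, ← ENNReal.rpow_mul]
        norm_num

theorem integral_sq_eq_toReal_lintegral_enorm_sq {α : Type*} [MeasurableSpace α] {μ : Measure α}
    {u : α → ℝ} (hu : AEStronglyMeasurable u μ) :
    ∫ x, u x ^ 2 ∂μ = (∫⁻ x, ‖u x‖ₑ ^ 2 ∂μ).toReal := by
  simpa using integral_norm_eq_lintegral_enorm (hu.pow 2)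

theorem MeasureTheory.MemLp.lintegral_enorm_sq_lt_top {α : Type*} [MeasurableSpace α]
    {μ : Measure α} {u : α → ℝ} (hu : MemLp u 2 μ) : ∫⁻ x, ‖u x‖ₑ ^ 2 ∂μ < ∞ := by
  simpa [HasFiniteIntegral] using hu.integrable_sq.hasFiniteIntegral

section Young

variable {G : Type*} [MeasurableSpace G] [AddGroup G] [MeasurableAdd₂ G] [MeasurableNeg G]
  {μ : Measure G} [SFinite μ] {K ψ : G → ℝ}

theorem aestronglyMeasurable_integral_mul_sub (hK : Measurable K) (hψ : Measurable ψ) :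
    AEStronglyMeasurable (fun x => ∫ y, K y * ψ (x - y) ∂μ) μ :=
  ((hK.comp measurable_snd).mul (hψ.comp measurable_sub)).stronglyMeasurable.integral_prod_right'
    |>.aestronglyMeasurable

variable [μ.IsAddRightInvariant]

theorem lintegral_sq_lintegral_mul_sub_le {a b : G → ℝ≥0∞} (ha : Measurable a)
    (hb : Measurable b) :
    ∫⁻ x, (∫⁻ y, a y * b (x - y) ∂μ) ^ 2 ∂μ ≤ (∫⁻ y, a y ∂μ) ^ 2 * ∫⁻ x, b x ^ 2 ∂μ := by
  have hb_sub : Measurable fun p : G × G => b (p.1 - p.2) := hb.comp measurable_sub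
  have hab : Measurable fun p : G × G => a p.2 * b (p.1 - p.2) ^ 2 :=
    (ha.comp measurable_snd).mul (hb_sub.pow_const 2)
  have htranslate : ∀ y, ∫⁻ x, a y * b (x - y) ^ 2 ∂μ = a y * ∫⁻ x, b x ^ 2 ∂μ := fun y => by
    rw [lintegral_const_mul _ (by fun_prop : Measurable fun x => b (x - y) ^ 2),
      lintegral_sub_right_eq_self (fun x => b x ^ 2)]
  calc ∫⁻ x, (∫⁻ y, a y * b (x - y) ∂μ) ^ 2 ∂μ
      ≤ ∫⁻ x, (∫⁻ y, a y ∂μ) * ∫⁻ y, a y * b (x - y) ^ 2 ∂μ ∂μ := by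
        exact lintegral_mono fun x => ENNReal.sq_lintegral_mul_le ha.aemeasurable
          (hb_sub.comp measurable_prodMk_left).aemeasurable
    _ = (∫⁻ y, a y ∂μ) * ∫⁻ y, ∫⁻ x, a y * b (x - y) ^ 2 ∂μ ∂μ := by
        rw [lintegral_const_mul _ hab.lintegral_prod_right',
          lintegral_lintegral_swap hab.aemeasurable]
    _ = (∫⁻ y, a y ∂μ) ^ 2 * ∫⁻ x, b x ^ 2 ∂μ := by
        rw [lintegral_congr htranslate, lintegral_mul_const _ ha, sq, mul_assoc]

theorem lintegral_enorm_sq_integral_mul_sub_le (hK : Measurable K) (hψ : Measurable ψ) :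
    ∫⁻ x, ‖∫ y, K y * ψ (x - y) ∂μ‖ₑ ^ 2 ∂μ ≤
      (∫⁻ y, ‖K y‖ₑ ∂μ) ^ 2 * ∫⁻ x, ‖ψ x‖ₑ ^ 2 ∂μ := by
  calc ∫⁻ x, ‖∫ y, K y * ψ (x - y) ∂μ‖ₑ ^ 2 ∂μ
      ≤ ∫⁻ x, (∫⁻ y, ‖K y‖ₑ * ‖ψ (x - y)‖ₑ ∂μ) ^ 2 ∂μ := by
        refine lintegral_mono fun x => ?_
        gcongr
        simpa only [enorm_mul] using enorm_integral_le_lintegral_enorm (fun y => K y * ψ (x - y))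
    _ ≤ _ := lintegral_sq_lintegral_mul_sub_le hK.enorm hψ.enorm

theorem lintegral_enorm_sq_integral_mul_sub_lt_top (hK : Measurable K) (hψ : Measurable ψ)
    (hK_int : Integrable K μ) (hψ_L2 : MemLp ψ 2 μ) :
    ∫⁻ x, ‖∫ y, K y * ψ (x - y) ∂μ‖ₑ ^ 2 ∂μ < ∞ := by
  refine (lintegral_enorm_sq_integral_mul_sub_le hK hψ).trans_lt ?_
  exact ENNReal.mul_lt_top (ENNReal.pow_lt_top hK_int.hasFiniteIntegral)
    hψ_L2.lintegral_enorm_sq_lt_top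

theorem integrable_sq_integral_mul_sub (hK : Measurable K) (hψ : Measurable ψ)
    (hK_int : Integrable K μ) (hψ_L2 : MemLp ψ 2 μ) :
    Integrable (fun x => (∫ y, K y * ψ (x - y) ∂μ) ^ 2) μ :=
  ⟨(aestronglyMeasurable_integral_mul_sub hK hψ).pow 2, by
    simpa [HasFiniteIntegral] using lintegral_enorm_sq_integral_mul_sub_lt_top hK hψ hK_int hψ_L2⟩

theorem integral_sq_integral_mul_sub_le (hK : Measurable K) (hψ : Measurable ψ)
    (hK_int : Integrable K μ) (hψ_L2 : MemLp ψ 2 μ) :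
    ∫ x, (∫ y, K y * ψ (x - y) ∂μ) ^ 2 ∂μ ≤ (∫ y, |K y| ∂μ) ^ 2 * ∫ x, ψ x ^ 2 ∂μ := by
  have hK_L1 : ∫ y, |K y| ∂μ = (∫⁻ y, ‖K y‖ₑ ∂μ).toReal := by
    simpa using integral_norm_eq_lintegral_enorm hK.aestronglyMeasurable
  rw [integral_sq_eq_toReal_lintegral_enorm_sq (aestronglyMeasurable_integral_mul_sub hK hψ),
    integral_sq_eq_toReal_lintegral_enorm_sq hψ.aestronglyMeasurable, hK_L1,
    ← ENNReal.toReal_pow, ← ENNReal.toReal_mul]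
  refine ENNReal.toReal_mono ?_ (lintegral_enorm_sq_integral_mul_sub_le hK hψ)
  exact ENNReal.mul_ne_top (ENNReal.pow_ne_top hK_int.hasFiniteIntegral.ne)
    hψ_L2.lintegral_enorm_sq_lt_top.ne

end Young

theorem integral_abs_rescale (k : ℝ → ℝ) {c : ℝ} (hc : c ≠ 0) :
    ∫ t, |1 / c * k (t / c)| = ∫ t, |k t| := by
  simp_rw [abs_mul, integral_const_mul]
  rw [Measure.integral_comp_div (fun t => |k t|) c, smul_eq_mul, ← mul_assoc, one_div, abs_inv,
    inv_mul_cancel₀ (abs_ne_zero.mpr hc), one_mul]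

theorem integral_abs_prod_rescale {ι : Type*} [Fintype ι] (k : ℝ → ℝ) {h : ι → ℝ}
    (hh : ∀ q, h q ≠ 0) :
    ∫ y : ι → ℝ, |∏ q, 1 / h q * k (y q / h q)| = (∫ t, |k t|) ^ Fintype.card ι := by
  simp_rw [Finset.abs_prod]
  rw [volume_pi, integral_fintype_prod_eq_prod (fun q t => |1 / h q * k (t / h q)|)]
  simp_rw [integral_abs_rescale k (hh _), Finset.prod_const, Finset.card_univ]

theorem integral_mul_le_of_le {α : Type*} [MeasurableSpace α] {μ : Measure α} {u f : α → ℝ}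
    {M : ℝ} (hu : Integrable u μ) (hu_nonneg : ∀ x, 0 ≤ u x) (hf_nonneg : ∀ x, 0 ≤ f x)
    (hf_le : ∀ x, f x ≤ M) :
    ∫ x, u x * f x ∂μ ≤ M * ∫ x, u x ∂μ := by
  rw [← integral_const_mul]
  refine integral_mono_of_nonneg (.of_forall fun x => mul_nonneg (hu_nonneg x) (hf_nonneg x))
    (hu.const_mul M) (.of_forall fun x => ?_)
  simpa only [mul_comm M] using mul_le_mul_of_nonneg_left (hf_le x) (hu_nonneg x)

theorem conv_estimate_second_moment_general (d : ℕ)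
    (f : (Fin d → ℝ) → ℝ) (M : ℝ)
    (hf_nonneg : ∀ y, 0 ≤ f y) (hf_bound : ∀ y, f y ≤ M)
    (k : ℝ → ℝ) (hk_meas : Measurable k)
    (hk_L1 : Integrable k)
    (h : Fin d → ℝ) (hh : ∀ q, 0 < h q)
    (ψ : (Fin d → ℝ) → ℝ) (hψ_meas : Measurable ψ) (hψ_L2 : MemLp ψ 2 volume) :
    (∫ x : Fin d → ℝ,
        (∫ y : Fin d → ℝ,
          (∏ q : Fin d, (1 / h q) * k (y q / h q)) * ψ (x - y)) ^ 2 * f x) ≤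
      M * (∫ y : ℝ, |k y|) ^ (2 * d) * ∫ x : Fin d → ℝ, (ψ x) ^ 2 := by
  set K : (Fin d → ℝ) → ℝ := fun y => ∏ q : Fin d, (1 / h q) * k (y q / h q)
  have hK_meas : Measurable K := by fun_prop
  have hK_int : Integrable K :=
    Integrable.fintype_prod fun q => (hk_L1.comp_div (hh q).ne').const_mul _
  have hM : 0 ≤ M := (hf_nonneg 0).trans (hf_bound 0)
  calc _ ≤ M * ∫ x, (∫ y, K y * ψ (x - y)) ^ 2 :=
        integral_mul_le_of_le (integrable_sq_integral_mul_sub hK_meas hψ_meas hK_int hψ_L2)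
          (fun _ => sq_nonneg _) hf_nonneg hf_bound
    _ ≤ M * ((∫ y, |K y|) ^ 2 * ∫ x, ψ x ^ 2) := by
        gcongr
        exact integral_sq_integral_mul_sub_le hK_meas hψ_meas hK_int hψ_L2
    _ = M * (∫ y : ℝ, |k y|) ^ (2 * d) * ∫ x, ψ x ^ 2 := by
        rw [integral_abs_prod_rescale k fun q => (hh q).ne', Fintype.card_fin]
        ring

theorem conv_estimate_second_moment (d : ℕ) (hd : 0 < d)
    (f : (Fin d → ℝ) → ℝ) (M : ℝ)
    (hf_nonneg : ∀ y, 0 ≤ f y) (hf_bound : ∀ y, f y ≤ M)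
    (hf_int : ∫ y : Fin d → ℝ, f y = 1)
    (k : ℝ → ℝ) (hk_meas : Measurable k) (hk_symm : ∀ y, k (-y) = k y)
    (hk_L1 : Integrable k)
    (h : Fin d → ℝ) (hh : ∀ q, 0 < h q)
    (ψ : (Fin d → ℝ) → ℝ) (hψ_meas : Measurable ψ) (hψ_L2 : MemLp ψ 2 volume) :
    (∫ x : Fin d → ℝ,
        (∫ y : Fin d → ℝ,
          (∏ q : Fin d, (1 / h q) * k (y q / h q)) * ψ (x - y)) ^ 2 * f x) ≤
      M * (∫ y : ℝ, |k y|) ^ (2 * d) * ∫ x : Fin d → ℝ, (ψ x) ^ 2 :=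
  conv_estimate_second_moment_general d f M hf_nonneg hf_bound k hk_meas hk_L1 h hh ψ hψ_meas hψ_L2
end
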